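/- Let 𝔽_q be a finite field with q elements, k ≥ 1, n = q^k − 1, and let g⊥(x) ∈ 𝔽_q[x] be a monic irreducible polynomial of degree k dividing x^n − 1. Let 𝒞 ⊆ 𝔽_q^n be the cyclic code generated by g(x) = (x^n−1)/g⊥(x). Then the action of the cyclic group C of order n (generated by the cyclic shift c) on 𝒞 ∖ {0} is simply transitive (free and transitive) if and only if the image of x in 𝔽_q[x]/(g⊥(x)) has multiplicative order n, i.e., if and only if g⊥ is primitive. -/
import Mathlib


/-- The (leftward) cyclic shift on words of length `n`:
`c(w₁,…,wₙ) = (w₂,…,wₙ,w₁)`. -/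
def cshift {A : Type*} {n : ℕ} (w : Fin n → A) : Fin n → A :=
  fun i => w ⟨((i : ℕ) + 1) % n, Nat.mod_lt _ i.pos⟩

/-- The major index of a word: `maj w = Σ_{1 ≤ i ≤ n-1, w_i > w_{i+1}} i`
(here positions are 0-indexed, so position `i : Fin n` is the `(i+1)`-st letter). -/
def majIdx {A : Type*} [LinearOrder A] {n : ℕ} (w : Fin n → A) : ℕ :=
  ∑ i : Fin n,
    if h : (i : ℕ) + 1 < n then (if w ⟨(i : ℕ) + 1, h⟩ < w i then (i : ℕ) + 1 else 0) else 0

/-- The number of cyclic descents of a word, `cdes w = #{i : w_i > w_{i+1}}`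
with indices read cyclically (`w_{n+1} := w_1`). -/
def cdes {A : Type*} [LinearOrder A] {n : ℕ} (w : Fin n → A) : ℕ :=
  (Finset.univ.filter fun i : Fin n =>
    w ⟨((i : ℕ) + 1) % n, Nat.mod_lt _ i.pos⟩ < w i).card

/-- The inversion number of a word: `inv w = #{(i,j) : i < j, w_i > w_j}`. -/
def invNum {A : Type*} [LinearOrder A] {n : ℕ} (w : Fin n → A) : ℕ :=
  (Finset.univ.filter fun p : Fin n × Fin n => p.1 < p.2 ∧ w p.2 < w p.1).card

/-- The Hamming weight of a binary word: the number of ones. -/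
def wt {n : ℕ} (w : Fin n → Bool) : ℕ :=
  (Finset.univ.filter fun i => w i = true).card

/-- The triple `(X, Σ_{x ∈ X} t^{stat x}, C)` exhibits the cyclic sieving phenomenon,
where `C` is the cyclic group of order `n` generated by the cyclic shift `c` acting on `X`:
for every `d`, the number of fixed points of `c^d` on `X` equals the evaluation of
`Σ_{x ∈ X} t^{stat x}` at `t = ζ^d`, with `ζ = exp(2πi/n)`. -/
def exhibitsCSP {A : Type*} [DecidableEq A] {n : ℕ} (X : Finset (Fin n → A))
    (stat : (Fin n → A) → ℕ) : Prop :=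
  ∀ d : ℕ,
    ((X.filter fun v => cshift^[d] v = v).card : ℂ) =
      ∑ v ∈ X, Complex.exp (2 * (Real.pi : ℂ) * Complex.I / n) ^ (d * stat v)

/-- The polynomial `w₁ + w₂ x + ⋯ + wₙ x^{n-1}` associated to a word `w ∈ F^n` under
the standard identification of `F^n` with `F[x]/(xⁿ-1)`.  A word `w` belongs to the
cyclic code generated by a monic divisor `g` of `xⁿ - 1` exactly when `g ∣ wordPoly w`. -/
noncomputable def wordPoly {F : Type*} [CommRing F] {n : ℕ} (w : Fin n → F) :
    Polynomial F :=
  ∑ i : Fin n, Polynomial.C (w i) * Polynomial.X ^ (i : ℕ)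

namespace Stmt12Aux

open Polynomial

variable {F : Type*} [Field F] {n : ℕ}

lemma wordPoly_coeff' (w : Fin n → F) (m : ℕ) :
    (wordPoly w).coeff m = if h : m < n then w ⟨m, h⟩ else 0 := by
  unfold wordPoly
  rw [finset_sum_coeff]
  simp only [coeff_C_mul, coeff_X_pow, mul_ite, mul_one, mul_zero]
  split
  next h =>
    rw [Finset.sum_eq_single (⟨m, h⟩ : Fin n)]
    · simp
    · intro i _ hi
      rw [if_neg]
      intro he
      exact hi (by ext; exact he.symm)
    · intro hm; exact absurd (Finset.mem_univ _) hm
  next h =>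
    apply Finset.sum_eq_zero
    intro i _
    rw [if_neg]
    intro he
    exact h (he ▸ i.isLt)

lemma wordPoly_coeff (w : Fin n → F) (i : Fin n) : (wordPoly w).coeff i = w i := by
  rw [wordPoly_coeff', dif_pos i.isLt]

lemma wordPoly_inj {w v : Fin n → F} (h : wordPoly w = wordPoly v) : w = v := by
  funext i
  rw [← wordPoly_coeff w i, h, wordPoly_coeff]

lemma wordPoly_zero : wordPoly (0 : Fin n → F) = 0 := by
  simp [wordPoly]

lemma wordPoly_degree_lt (w : Fin n → F) : (wordPoly w).degree < n := by
  rw [degree_lt_iff_coeff_zero]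
  intro m hm
  rw [wordPoly_coeff', dif_neg (by omega)]

lemma shift_key (w : Fin n → F) :
    (Polynomial.X ^ n - 1 : Polynomial F) ∣
      Polynomial.X * wordPoly (cshift w) - wordPoly w := by
  have hmod : ∀ i : Fin n, ((i : ℕ) + 1) % n = if (i : ℕ) + 1 = n then 0 else (i : ℕ) + 1 := by
    intro i
    split
    next h => rw [h, Nat.mod_self]
    next h => exact Nat.mod_eq_of_lt (lt_of_le_of_ne i.isLt h)
  set f : Fin n → Fin n := fun i => ⟨((i : ℕ) + 1) % n, Nat.mod_lt _ i.pos⟩ with hf_def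
  have hfinj : Function.Injective f := by
    intro i j hij
    have hval : ((i : ℕ) + 1) % n = ((j : ℕ) + 1) % n := congrArg Fin.val hij
    have hi := i.isLt
    have hj := j.isLt
    rw [hmod i, hmod j] at hval
    ext
    split_ifs at hval <;> omega
  have hf : Function.Bijective f := Finite.injective_iff_bijective.mp hfinj
  have h2 : wordPoly w = ∑ i : Fin n, Polynomial.C (w (f i)) * Polynomial.X ^ ((f i : ℕ)) :=
    (Fintype.sum_bijective f hf _ (fun j => Polynomial.C (w j) * Polynomial.X ^ (j : ℕ))
      (fun i => rfl)).symm
  have h1 : Polynomial.X * wordPoly (cshift w) =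
      ∑ i : Fin n, Polynomial.C (w (f i)) * Polynomial.X ^ ((i : ℕ) + 1) := by
    rw [wordPoly, Finset.mul_sum]
    refine Finset.sum_congr rfl fun i _ => ?_
    have : cshift w i = w (f i) := rfl
    rw [this]
    ring
  rw [h1, h2, ← Finset.sum_sub_distrib]
  refine Finset.dvd_sum fun i _ => ?_
  rw [← mul_sub]
  apply Dvd.dvd.mul_left
  have hfi : (f i : ℕ) = ((i : ℕ) + 1) % n := rfl
  rcases Nat.lt_or_ge ((i : ℕ) + 1) n with h | h
  · rw [hfi, Nat.mod_eq_of_lt h, sub_self]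
    exact dvd_zero _
  · have hin : (i : ℕ) + 1 = n := by have := i.isLt; omega
    rw [hfi, hin, Nat.mod_self, pow_zero]

end Stmt12Aux

open Polynomial Stmt12Aux

/-- for the cyclic code C ⊆ F_q^n of length n = q^k - 1 generated by
g = (x^n - 1)/gperp, where gperp is monic irreducible of degree k dividing x^n - 1,
the action of the cyclic group of order n on C ∖ {0} is simply transitive (free and
transitive) if and only if the image of x in F_q[x]/(gperp) has multiplicative order n,
i.e. gperp is primitive. -/
theorem stmt12 {F : Type*} [Field F] [Fintype F] (k : ℕ) (hk : 1 ≤ k)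
    (n : ℕ) (hn : n = Fintype.card F ^ k - 1)
    (gperp : Polynomial F) (hmonic : gperp.Monic) (hirr : Irreducible gperp)
    (hdeg : gperp.natDegree = k) (hdvd : gperp ∣ Polynomial.X ^ n - 1)
    (g : Polynomial F) (hg : g * gperp = Polynomial.X ^ n - 1) :
    ((∀ w : Fin n → F, g ∣ wordPoly w → w ≠ 0 →
        ∀ j : ℕ, 0 < j → j < n → cshift^[j] w ≠ w) ∧
      (∀ w : Fin n → F, g ∣ wordPoly w → w ≠ 0 →
        ∀ v : Fin n → F, g ∣ wordPoly v → v ≠ 0 →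
          ∃ j : ℕ, cshift^[j] w = v)) ↔
      orderOf (AdjoinRoot.root gperp) = n := by
  haveI : Fact (Irreducible gperp) := ⟨hirr⟩
  set q := Fintype.card F with hq_def
  have hq : 2 ≤ q := Fintype.one_lt_card
  have hqk : q ≤ q ^ k := Nat.le_self_pow (by omega) q
  have hqk1 : 1 ≤ q ^ k := by omega
  have hn1 : n + 1 = q ^ k := by omega
  have hn0 : 0 < n := by omega
  have hXn : (X ^ n - 1 : F[X]) ≠ 0 := by
    have := X_pow_sub_C_ne_zero hn0 (1 : F)
    rwa [map_one] at this
  have hg0 : g ≠ 0 := fun h => hXn (by rw [← hg, h, zero_mul])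
  have hgp0 : gperp ≠ 0 := hmonic.ne_zero
  -- squarefreeness of X^n - 1
  have hnF : ((n : F)) ≠ 0 := by
    have hcast : ((q ^ k : ℕ) : F) = 0 := by
      rw [Nat.cast_pow, FiniteField.cast_card_eq_zero, zero_pow (by omega)]
    have : ((n : ℕ) : F) = -1 := by
      have : ((n + 1 : ℕ) : F) = 0 := by rw [hn1]; exact hcast
      push_cast at this
      rw [eq_neg_iff_add_eq_zero]
      exact this
    rw [this]
    exact neg_ne_zero.mpr one_ne_zero
  have hsq : Squarefree (X ^ n - 1 : F[X]) := by
    have hsep := separable_X_pow_sub_C_unit (R := F) 1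
      (IsUnit.mk0 _ hnF)
    rw [Units.val_one, map_one] at hsep
    exact hsep.squarefree
  have hndvd : ¬ gperp ∣ g := by
    intro hd
    refine hirr.not_isUnit (hsq gperp ?_)
    rw [← hg]
    exact mul_dvd_mul hd dvd_rfl
  have hcop : IsCoprime gperp g := hirr.coprime_iff_not_dvd.mpr hndvd
  set α := AdjoinRoot.root gperp with hα_def
  have haevalXn : (Polynomial.aeval α) (X ^ n - 1 : F[X]) = 0 := by
    rw [AdjoinRoot.aeval_eq, AdjoinRoot.mk_eq_zero]
    exact hdvd
  have hα_pow : α ^ n = 1 := by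
    have := haevalXn
    rw [map_sub, map_pow, aeval_X, map_one, sub_eq_zero] at this
    exact this
  set ψ : (Fin n → F) → AdjoinRoot gperp := fun w => Polynomial.aeval α (wordPoly w)
    with hψ_def
  have hψ_inj : ∀ w v : Fin n → F, g ∣ wordPoly w → g ∣ wordPoly v → ψ w = ψ v → w = v := by
    intro w v hw hv h
    have h1 : gperp ∣ wordPoly w - wordPoly v := by
      rw [← AdjoinRoot.mk_eq_zero, ← AdjoinRoot.aeval_eq, map_sub, sub_eq_zero]
      exact h
    have h2 : g ∣ wordPoly w - wordPoly v := dvd_sub hw hv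
    have h3 : (X ^ n - 1 : F[X]) ∣ wordPoly w - wordPoly v := by
      rw [← hg, mul_comm]
      exact hcop.mul_dvd h1 h2
    have hdegXn : (X ^ n - 1 : F[X]).degree = n := by
      have := degree_X_pow_sub_C hn0 (1 : F)
      rwa [map_one] at this
    have h4 : wordPoly w - wordPoly v = 0 := by
      apply eq_zero_of_dvd_of_degree_lt h3
      rw [hdegXn]
      exact lt_of_le_of_lt (degree_sub_le _ _)
        (max_lt (wordPoly_degree_lt w) (wordPoly_degree_lt v))
    exact wordPoly_inj (sub_eq_zero.mp h4)
  have hψ0 : ∀ w : Fin n → F, g ∣ wordPoly w → w ≠ 0 → ψ w ≠ 0 := by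
    intro w hw hw0 h
    apply hw0
    apply hψ_inj w 0 hw (by rw [wordPoly_zero]; exact dvd_zero g)
    rw [h, hψ_def]
    simp [wordPoly_zero]
  have hshift : ∀ w : Fin n → F, α * ψ (cshift w) = ψ w := by
    intro w
    obtain ⟨s, hs⟩ := shift_key w
    have := congrArg (Polynomial.aeval α) hs
    rw [map_sub, map_mul, map_mul, aeval_X, haevalXn, zero_mul, sub_eq_zero] at this
    exact this
  have hcode_shift : ∀ w : Fin n → F, g ∣ wordPoly w → g ∣ wordPoly (cshift w) := by
    intro w hw
    obtain ⟨s, hs⟩ := shift_key w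
    have hX : (X : F[X]) ^ (n - 1) * X = X ^ n := by
      rw [← pow_succ]
      congr 1
      omega
    have h1 : wordPoly (cshift w) = X ^ (n - 1) * wordPoly w +
        (X ^ (n - 1) * (X ^ n - 1) * s - (X ^ n - 1) * wordPoly (cshift w)) := by
      linear_combination (X ^ (n - 1) : F[X]) * hs - wordPoly (cshift w) * hX
    rw [h1]
    have hgdvd : g ∣ (X ^ n - 1 : F[X]) := ⟨gperp, hg.symm⟩
    exact dvd_add (hw.mul_left _) (dvd_sub ((hgdvd.mul_left _).mul_right s) (hgdvd.mul_right _))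
  have hshift_iter : ∀ (j : ℕ) (w : Fin n → F), α ^ j * ψ (cshift^[j] w) = ψ w := by
    intro j
    induction j with
    | zero => intro w; simp
    | succ j ih =>
      intro w
      rw [Function.iterate_succ_apply', pow_succ, mul_assoc, hshift, ih]
  have hcode_iter : ∀ (j : ℕ) (w : Fin n → F), g ∣ wordPoly w → g ∣ wordPoly (cshift^[j] w) := by
    intro j
    induction j with
    | zero => intro w hw; exact hw
    | succ j ih =>
      intro w hw
      rw [Function.iterate_succ_apply']
      exact hcode_shift _ (ih w hw)
  have hα0 : α ≠ 0 := by
    intro h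
    rw [h, zero_pow hn0.ne'] at hα_pow
    exact zero_ne_one (α := AdjoinRoot gperp) hα_pow
  have hord_dvd : orderOf α ∣ n := orderOf_dvd_of_pow_eq_one hα_pow
  have hordpos : 0 < orderOf α :=
    (isOfFinOrder_iff_pow_eq_one.mpr ⟨n, hn0, hα_pow⟩).orderOf_pos
  -- the nonzero codeword given by g itself
  set w₀ : Fin n → F := fun i => g.coeff i with hw₀_def
  have hdegg : g.degree < n := by
    have hnat : g.natDegree + k = n := by
      have h1 := natDegree_mul hg0 hgp0
      rw [hg, hdeg] at h1
      have h2 : (X ^ n - 1 : F[X]).natDegree = n := by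
        have : (X ^ n - 1 : F[X]) = X ^ n - C 1 := by rw [map_one]
        rw [this, natDegree_X_pow_sub_C]
      rw [h2] at h1
      omega
    calc g.degree ≤ (g.natDegree : WithBot ℕ) := degree_le_natDegree
      _ < (n : WithBot ℕ) := by
          rw [Nat.cast_lt]
          omega
  have hwp0 : wordPoly w₀ = g := by
    apply Polynomial.ext
    intro m
    rw [wordPoly_coeff']
    split
    next h => rfl
    next h =>
      symm
      apply coeff_eq_zero_of_degree_lt
      exact lt_of_lt_of_le hdegg (by rw [Nat.cast_le]; omega)
  have hw₀code : g ∣ wordPoly w₀ := hwp0 ▸ dvd_refl g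
  have hw₀ne : w₀ ≠ 0 := fun h => hg0 (by rw [← hwp0, h, wordPoly_zero])
  constructor
  · rintro ⟨hfree, -⟩
    by_contra hne
    have hmlt : orderOf α < n := lt_of_le_of_ne (Nat.le_of_dvd hn0 hord_dvd) hne
    apply hfree w₀ hw₀code hw₀ne (orderOf α) hordpos hmlt
    apply hψ_inj _ _ (hcode_iter _ w₀ hw₀code) hw₀code
    have h1 := hshift_iter (orderOf α) w₀
    rwa [pow_orderOf_eq_one, one_mul] at h1
  · intro hord
    constructor
    · intro w hw hw0 j hj0 hjn hfix
      have h1 := hshift_iter j w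
      rw [hfix] at h1
      have hψne := hψ0 w hw hw0
      have hpow : α ^ j = 1 := mul_right_cancel₀ hψne (h1.trans (one_mul (ψ w)).symm)
      have : n ∣ j := hord ▸ orderOf_dvd_of_pow_eq_one hpow
      have := Nat.le_of_dvd hj0 this
      omega
    · intro w hw hw0 v hv hv0
      haveI : DecidableEq (AdjoinRoot gperp) := Classical.decEq _
      haveI : Fintype (AdjoinRoot gperp) :=
        Module.fintypeOfFintype (AdjoinRoot.powerBasis hgp0).basis
      have hcard : Fintype.card (AdjoinRoot gperp) = q ^ k := by
        rw [Module.card_fintype (AdjoinRoot.powerBasis hgp0).basis, Fintype.card_fin,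
          AdjoinRoot.powerBasis_dim, hdeg]
      have hcardu : Fintype.card (AdjoinRoot gperp)ˣ = n := by
        rw [Fintype.card_units, hcard]
        omega
      set u : (AdjoinRoot gperp)ˣ := Units.mk0 α hα0 with hu_def
      have huval : (u : AdjoinRoot gperp) = α := rfl
      have huord : orderOf u = n := by
        rw [← orderOf_units, huval]
        exact hord
      have htop : Subgroup.zpowers u = ⊤ := by
        apply Subgroup.eq_top_of_card_eq
        rw [Nat.card_zpowers, huord, Nat.card_eq_fintype_card, hcardu]
      set uw : (AdjoinRoot gperp)ˣ := Units.mk0 (ψ w) (hψ0 w hw hw0) with huw_def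
      set uv : (AdjoinRoot gperp)ˣ := Units.mk0 (ψ v) (hψ0 v hv hv0) with huv_def
      have hmem : uv * uw⁻¹ ∈ Subgroup.zpowers u := htop ▸ Subgroup.mem_top _
      have hmem' : uv * uw⁻¹ ∈ Submonoid.powers u := by
        rw [(isOfFinOrder_of_finite u).mem_powers_iff_mem_zpowers]
        exact hmem
    
      obtain ⟨m, hm⟩ := hmem'
      have hmval : α ^ m * ψ w = ψ v := by
        have := congrArg (Units.val) hm
        rw [Units.val_pow_eq_pow_val, huval, Units.val_mul] at this
        have hinv : ((uw⁻¹ : (AdjoinRoot gperp)ˣ) : AdjoinRoot gperp) = (ψ w)⁻¹ := by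
          exact Units.val_inv_eq_inv_val uw
        rw [hinv] at this
        have huvval : ((uv : (AdjoinRoot gperp)ˣ) : AdjoinRoot gperp) = ψ v := rfl
        rw [huvval] at this
        rw [this, mul_assoc, inv_mul_cancel₀ (hψ0 w hw hw0), mul_one]
      refine ⟨(n - 1) * m, ?_⟩
      apply hψ_inj _ _ (hcode_iter _ w hw) hv
      have h1 := hshift_iter ((n - 1) * m) w
      have hα_j : α ^ ((n - 1) * m) * ψ v = ψ w := by
        rw [← hmval, ← mul_assoc, ← pow_add]
        have hexp : (n - 1) * m + m = n * m := by
          rw [Nat.sub_one_mul, Nat.sub_add_cancel (Nat.le_mul_of_pos_left m hn0)]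
        rw [hexp, pow_mul, hα_pow, one_pow, one_mul]
      have hα_J_ne : α ^ ((n - 1) * m) ≠ 0 := pow_ne_zero _ hα0
      exact mul_left_cancel₀ hα_J_ne (h1.trans hα_j.symm)
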